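/- If λ is a nonzero eigenvalue of the reduced DMD operator Ã = U* Ṡ V Σ⁻¹ with eigenvector w, then the exact DMD mode φ = Ṡ V Σ⁻¹ w is an eigenvector of A = Ṡ S⁺ with the same eigenvalue λ, provided φ ≠ 0. -/
import Mathlib

open Matrix

/-- If `λ` is a nonzero eigenvalue of the reduced DMD operator `Ã = U* Ṡ V Σ⁻¹`
with eigenvector `w`, then the exact DMD mode `φ = Ṡ V Σ⁻¹ w` is an eigenvector
of `A = Ṡ S⁺` (with `S⁺ = V Σ⁻¹ U*`) for the same eigenvalue `λ`, provided `φ ≠ 0`. -/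
theorem exact_dmd_modes_are_eigenvectors
    (n m r : ℕ)
    (S Sdot : Matrix (Fin n) (Fin m) ℂ)
    (U : Matrix (Fin n) (Fin r) ℂ) (Sig : Matrix (Fin r) (Fin r) ℂ)
    (V : Matrix (Fin m) (Fin r) ℂ)
    (hU : Uᴴ * U = 1) (hV : Vᴴ * V = 1)
    (hSig : IsUnit Sig.det)
    (hSVD : S = U * Sig * Vᴴ)
    (lam : ℂ) (w : Fin r → ℂ)
    (hw : (Uᴴ * Sdot * V * Sig⁻¹) *ᵥ w = lam • w)
    (hlam : lam ≠ 0)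
    (phi : Fin n → ℂ)
    (hphi : phi = (Sdot * V * Sig⁻¹) *ᵥ w)
    (hphi0 : phi ≠ 0) :
    (Sdot * (V * Sig⁻¹ * Uᴴ)) *ᵥ phi = lam • phi := by
  subst hphi
  rw [mulVec_mulVec]
  have h : Sdot * (V * Sig⁻¹ * Uᴴ) * (Sdot * V * Sig⁻¹)
      = (Sdot * V * Sig⁻¹) * (Uᴴ * Sdot * V * Sig⁻¹) := by
    simp only [Matrix.mul_assoc]
  rw [h, ← mulVec_mulVec, hw, mulVec_smul]
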